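/- Let S be a semigroup, U a subsemigroup with the property that Green's L and R relations on U are the restrictions of those on S. Let x, y ∈ U with y stable in S. If x J y in S and x ≤_J y in U, then x D y in U. -/

import Mathlib

/-- `x ≤_R y` in a semigroup: `x ∈ yS¹`. -/
def leR {S : Type*} [Semigroup S] (x y : S) : Prop := x = y ∨ ∃ t, x = y * t

/-- `x ≤_L y` in a semigroup: `x ∈ S¹y`. -/
def leL {S : Type*} [Semigroup S] (x y : S) : Prop := x = y ∨ ∃ t, x = t * y

/-- `x ≤_J y` in a semigroup: `x ∈ S¹yS¹`. -/
def leJ {S : Type*} [Semigroup S] (x y : S) : Prop :=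
  x = y ∨ (∃ t, x = y * t) ∨ (∃ t, x = t * y) ∨ ∃ t u, x = t * y * u

/-- Green's relation `R`: `xS¹ = yS¹`. -/
def GreenR {S : Type*} [Semigroup S] (x y : S) : Prop := leR x y ∧ leR y x

/-- Green's relation `L`: `S¹x = S¹y`. -/
def GreenL {S : Type*} [Semigroup S] (x y : S) : Prop := leL x y ∧ leL y x

/-- Green's relation `J`: `S¹xS¹ = S¹yS¹`. -/
def GreenJ {S : Type*} [Semigroup S] (x y : S) : Prop := leJ x y ∧ leJ y x

/-- Green's relation `H = R ∩ L`. -/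
def GreenH {S : Type*} [Semigroup S] (x y : S) : Prop := GreenR x y ∧ GreenL x y

/-- Green's relation `D = R ∘ L`. -/
def GreenD {S : Type*} [Semigroup S] (x y : S) : Prop := ∃ z, GreenR x z ∧ GreenL z y

/-!
Write `x = z u` and `z = t y` with `u, t ∈ U¹`, so that `x ≤_R z ≤_L y` in `U`. In `S` we have
`y ≤_J x ≤_J z ≤_J y` and `y ≤_J x ≤_J y u ≤_J y`, so stability of `y` gives `z L y` and `y R y u`.
Since `R` is a left congruence, `z = t y R t y u = x`. Both relations hold in `S` between elements
of `U`, hence in `U`, and `x R z L y` there.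
-/

section Green

variable {S : Type*} [Semigroup S]

theorem leJ_iff_exists_withOne {x y : S} :
    leJ x y ↔ ∃ a b : WithOne S, (x : WithOne S) = a * y * b := by
  constructor
  · rintro (rfl | ⟨t, rfl⟩ | ⟨t, rfl⟩ | ⟨t, u, rfl⟩)
    exacts [⟨1, 1, by simp⟩, ⟨1, t, by simp⟩, ⟨t, 1, by simp⟩, ⟨t, u, by simp⟩]
  · rintro ⟨a, b, h⟩
    revert h
    induction a using WithOne.cases_on <;> induction b using WithOne.cases_on <;>
      simp only [one_mul, mul_one, ← WithOne.coe_mul, WithOne.coe_inj] <;> grind [leJ]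

theorem leJ_trans {x y z : S} (hxy : leJ x y) (hyz : leJ y z) : leJ x z := by
  rw [leJ_iff_exists_withOne] at *
  obtain ⟨a, b, hx⟩ := hxy
  obtain ⟨c, d, hy⟩ := hyz
  exact ⟨a * c, d * b, by rw [hx, hy]; simp only [mul_assoc]⟩

theorem leJ_of_leR {x y : S} : leR x y → leJ x y := by
  rintro (h | h) <;> simp [leJ, h]

theorem leJ_of_leL {x y : S} : leL x y → leJ x y := by
  rintro (h | h) <;> simp [leJ, h]

theorem leR_mul_right (x a : S) : leR (x * a) x := Or.inr ⟨a, rfl⟩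

theorem leL_mul_left (a x : S) : leL (a * x) x := Or.inr ⟨a, rfl⟩

theorem leR.map {T : Type*} [Semigroup T] (f : S →ₙ* T) {x y : S} (h : leR x y) :
    leR (f x) (f y) := by
  rcases h with rfl | ⟨t, rfl⟩
  exacts [Or.inl rfl, Or.inr ⟨f t, map_mul f y t⟩]

theorem leL.map {T : Type*} [Semigroup T] (f : S →ₙ* T) {x y : S} (h : leL x y) :
    leL (f x) (f y) := by
  rcases h with rfl | ⟨t, rfl⟩
  exacts [Or.inl rfl, Or.inr ⟨f t, map_mul f t y⟩]

theorem leR.mul_left (a : S) {x y : S} (h : leR x y) : leR (a * x) (a * y) := by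
  rcases h with rfl | ⟨t, rfl⟩
  exacts [Or.inl rfl, Or.inr ⟨t, (mul_assoc a y t).symm⟩]

theorem GreenR.refl (x : S) : GreenR x x := ⟨Or.inl rfl, Or.inl rfl⟩

theorem GreenL.refl (x : S) : GreenL x x := ⟨Or.inl rfl, Or.inl rfl⟩

theorem GreenR.symm {x y : S} (h : GreenR x y) : GreenR y x := ⟨h.2, h.1⟩

theorem GreenL.symm {x y : S} (h : GreenL x y) : GreenL y x := ⟨h.2, h.1⟩

theorem GreenR.mul_left (a : S) {x y : S} (h : GreenR x y) : GreenR (a * x) (a * y) :=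
  ⟨h.1.mul_left a, h.2.mul_left a⟩

theorem leJ.exists_leR_leL {x y : S} (h : leJ x y) : ∃ z, leR x z ∧ leL z y := by
  rcases h with rfl | ⟨t, rfl⟩ | ⟨t, rfl⟩ | ⟨t, u, rfl⟩
  exacts [⟨x, Or.inl rfl, Or.inl rfl⟩, ⟨y, leR_mul_right y t, Or.inl rfl⟩,
    ⟨t * y, Or.inl rfl, leL_mul_left t y⟩, ⟨t * y, leR_mul_right _ u, leL_mul_left t y⟩]

def IsStable (y : S) : Prop :=
  ∀ a : S, (GreenJ y (y * a) → GreenR y (y * a)) ∧ (GreenJ y (a * y) → GreenL y (a * y))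

theorem IsStable.greenR_of_leR {x y : S} (hy : IsStable y) (hxy : leR x y) (hyx : leJ y x) :
    GreenR x y := by
  rcases hxy with rfl | ⟨t, rfl⟩
  exacts [GreenR.refl x, ((hy t).1 ⟨hyx, leJ_of_leR (leR_mul_right y t)⟩).symm]

theorem IsStable.greenL_of_leL {x y : S} (hy : IsStable y) (hxy : leL x y) (hyx : leJ y x) :
    GreenL x y := by
  rcases hxy with rfl | ⟨t, rfl⟩
  exacts [GreenL.refl x, ((hy t).2 ⟨hyx, leJ_of_leL (leL_mul_left t y)⟩).symm]

theorem IsStable.greenR_of_leR_of_leL {x y z : S} (hy : IsStable y) (hxz : leR x z)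
    (hzy : leL z y) (hyx : leJ y x) : GreenR x z := by
  rcases hzy with rfl | ⟨t, rfl⟩
  · exact hy.greenR_of_leR hxz hyx
  rcases hxz with rfl | ⟨u, rfl⟩
  · exact GreenR.refl _
  have hyu : GreenR (y * u) y := by
    refine hy.greenR_of_leR (leR_mul_right y u) (leJ_trans hyx (leJ_of_leL ?_))
    simpa only [mul_assoc] using leL_mul_left t (y * u)
  simpa only [mul_assoc] using hyu.mul_left t

end Green

/-- Let `U` be a subsemigroup of `S` on which Green's `L` and `R` relations are
the restrictions of those of `S`, and let `x, y ∈ U` with `y` stable in `S`.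
If `x J y` in `S` and `x ≤_J y` in `U`, then `x D y` in `U`. -/
theorem stmt_7 {S : Type*} [Semigroup S] (U : Subsemigroup S)
    (hL : ∀ u v : U, GreenL u v ↔ GreenL (u : S) (v : S))
    (hR : ∀ u v : U, GreenR u v ↔ GreenR (u : S) (v : S))
    (x y : U)
    (hstab : ∀ a : S, (GreenJ (y : S) ((y : S) * a) → GreenR (y : S) ((y : S) * a)) ∧
      (GreenJ (y : S) (a * (y : S)) → GreenL (y : S) (a * (y : S))))
    (hJ : GreenJ (x : S) (y : S)) (hle : leJ x y) :
    GreenD x y := by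
  have hy : IsStable (y : S) := hstab
  obtain ⟨z, hxz, hzy⟩ := hle.exists_leR_leL
  have hxzS : leR (x : S) z := hxz.map (MulMemClass.subtype U)
  have hzyS : leL (z : S) y := hzy.map (MulMemClass.subtype U)
  have hyz : leJ (y : S) z := leJ_trans hJ.2 (leJ_of_leR hxzS)
  exact ⟨z, (hR x z).2 (hy.greenR_of_leR_of_leL hxzS hzyS hJ.2),
    (hL z y).2 (hy.greenL_of_leL hzyS hyz)⟩
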